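/- (Lemma 3.3) The smallest eigenvalues of the finite sections form a strictly decreasing sequence of positive numbers: for every N ≥ 1, 0 < σ_{1,N+1} < σ_{1,N}. -/

import Mathlib

noncomputable section

open Real Filter MeasureTheory Metric

namespace SD

/-- `c_m = (tanh((m + n/2)(ξ₁ − ξ₂)))^(−1/2)` -/
def cseq (n : ℕ) (ξ₁ ξ₂ : ℝ) (m : ℕ) : ℝ :=
  (Real.tanh (((m : ℝ) + (n : ℝ) / 2) * (ξ₁ - ξ₂))) ^ (-(1 : ℝ) / 2)

/-- `d_m = (n + 2m)·c_m²·cosh ξ₂ − n·sinh ξ₂` -/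
def dseq (n : ℕ) (ξ₁ ξ₂ : ℝ) (m : ℕ) : ℝ :=
  ((n : ℝ) + 2 * (m : ℝ)) * (cseq n ξ₁ ξ₂ m) ^ 2 * Real.cosh ξ₂ - (n : ℝ) * Real.sinh ξ₂

/-- `w_m = √((m + n − 1)·m)` -/
def wseq (n : ℕ) (m : ℕ) : ℝ := Real.sqrt (((m : ℝ) + (n : ℝ) - 1) * (m : ℝ))

/-- The `N×N` finite-section matrix `L_N`. -/
def secMat (n : ℕ) (ξ₁ ξ₂ α : ℝ) (N : ℕ) : Matrix (Fin N) (Fin N) ℝ :=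
  Matrix.of fun i j =>
    if (i : ℕ) = (j : ℕ) then dseq n ξ₁ ξ₂ i / (2 * α)
    else if (i : ℕ) + 1 = (j : ℕ) ∨ (j : ℕ) + 1 = (i : ℕ) then
      -(wseq n (max (i : ℕ) (j : ℕ)) * cseq n ξ₁ ξ₂ (min (i : ℕ) (j : ℕ)) *
          cseq n ξ₁ ξ₂ (max (i : ℕ) (j : ℕ))) / (2 * α)
    else 0

/-- `σ_{1,N}`, the smallest eigenvalue of `L_N`. -/
def sigma1 (n : ℕ) (ξ₁ ξ₂ α : ℝ) (N : ℕ) : ℝ :=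
  sInf {σ : ℝ | ∃ v : Fin N → ℝ, v ≠ 0 ∧ (secMat n ξ₁ ξ₂ α N).mulVec v = σ • v}

/-- The ambient Euclidean space `ℝ^{n+2}`. -/
abbrev Pt (n : ℕ) := EuclideanSpace ℝ (Fin (n + 2))

/-- The first standard basis vector `e₁`. -/
def e1 (n : ℕ) : Pt n := EuclideanSpace.single 0 1

/-- Center `α·coth(ξ)·e₁` of the boundary sphere `{ξ(x) = ξ}`. -/
def ctr (n : ℕ) (α ξ : ℝ) : Pt n := (α * Real.cosh ξ / Real.sinh ξ) • e1 n

/-- Radius `α / sinh ξ`. -/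
def rad (α ξ : ℝ) : ℝ := α / Real.sinh ξ

/-- The open ball with center `α·coth(ξ)·e₁` and radius `α/sinh ξ`. -/
def ballB (n : ℕ) (α ξ : ℝ) : Set (Pt n) := Metric.ball (ctr n α ξ) (rad α ξ)

/-- The eccentric spherical shell `Ω = B₂ \ closure B₁`. -/
def shell (n : ℕ) (ξ₁ ξ₂ α : ℝ) : Set (Pt n) := ballB n α ξ₂ \ closure (ballB n α ξ₁)

/-- `Γ_D = ∂B₁`. -/
def gammaD (n : ℕ) (α ξ₁ : ℝ) : Set (Pt n) := frontier (ballB n α ξ₁)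

/-- `Γ_S = ∂B₂`. -/
def gammaS (n : ℕ) (α ξ₂ : ℝ) : Set (Pt n) := frontier (ballB n α ξ₂)

/-- The `(n+1)`-dimensional Hausdorff measure `μ`. -/
def surfMeas (n : ℕ) : Measure (Pt n) := μH[(n : ℝ) + 1]

/-- Dirichlet energy `∫_Ω ‖∇v‖²`. -/
def energy (n : ℕ) (ξ₁ ξ₂ α : ℝ) (v : Pt n → ℝ) : ℝ :=
  ∫ x in shell n ξ₁ ξ₂ α, ‖gradient v x‖ ^ 2

/-- `∫_{Γ_S} v² dμ`. -/
def bdryNormSq (n : ℕ) (ξ₂ α : ℝ) (v : Pt n → ℝ) : ℝ :=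
  ∫ x in gammaS n α ξ₂, (v x) ^ 2 ∂(surfMeas n)

/-- `v` is of class `C^k` on a neighborhood of the closure of `Ω`. -/
def SmoothNhd (n : ℕ) (ξ₁ ξ₂ α : ℝ) (k : ℕ∞) (v : Pt n → ℝ) : Prop :=
  ∃ U : Set (Pt n), IsOpen U ∧ closure (shell n ξ₁ ξ₂ α) ⊆ U ∧ ContDiffOn ℝ k v U

/-- Admissible trial function for the first Steklov–Dirichlet eigenvalue. -/
def Admissible (n : ℕ) (ξ₁ ξ₂ α : ℝ) (v : Pt n → ℝ) : Prop :=
  SmoothNhd n ξ₁ ξ₂ α 1 v ∧ (∀ x ∈ gammaD n α ξ₁, v x = 0) ∧ 0 < bdryNormSq n ξ₂ α v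

/-- Rayleigh quotient `R(v)`. -/
def rayleigh (n : ℕ) (ξ₁ ξ₂ α : ℝ) (v : Pt n → ℝ) : ℝ :=
  energy n ξ₁ ξ₂ α v / bdryNormSq n ξ₂ α v

/-- The first Steklov–Dirichlet eigenvalue `σ₁` of `Ω`. -/
def steklov1 (n : ℕ) (ξ₁ ξ₂ α : ℝ) : ℝ :=
  sInf {r : ℝ | ∃ v : Pt n → ℝ, Admissible n ξ₁ ξ₂ α v ∧ r = rayleigh n ξ₁ ξ₂ α v}

/-- Auxiliary pair `(G_m^{(n/2)}, G_{m+1}^{(n/2)})` for the Gegenbauer recursion. -/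
def gegenAux (n : ℕ) : ℕ → ℝ → ℝ × ℝ
  | 0, s => (1, (n : ℝ) * s)
  | m + 1, s =>
      ((gegenAux n m s).2,
        ((2 * ((m : ℝ) + 2) + (n : ℝ) - 2) * s * (gegenAux n m s).2
          - (((m : ℝ) + 2) + (n : ℝ) - 2) * (gegenAux n m s).1) / ((m : ℝ) + 2))

/-- The Gegenbauer polynomial `G_m^{(n/2)}`. -/
def gegen (n m : ℕ) (s : ℝ) : ℝ := (gegenAux n m s).1

/-- `r₊(x) = ‖x − α·e₁‖`. -/
def rP (n : ℕ) (α : ℝ) (x : Pt n) : ℝ := ‖x - α • e1 n‖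

/-- `r₋(x) = ‖x + α·e₁‖`. -/
def rM (n : ℕ) (α : ℝ) (x : Pt n) : ℝ := ‖x + α • e1 n‖

/-- Bispherical coordinate `ξ(x) = ln(r₋/r₊)`. -/
def xiC (n : ℕ) (α : ℝ) (x : Pt n) : ℝ := Real.log (rM n α x / rP n α x)

/-- Bispherical coordinate `cos θ(x)`. -/
def cosT (n : ℕ) (α : ℝ) (x : Pt n) : ℝ :=
  (rP n α x ^ 2 + rM n α x ^ 2 - 4 * α ^ 2) / (2 * rP n α x * rM n α x)

/-- The basis harmonic function `u_k`. -/
def uBase (n : ℕ) (ξ₁ α : ℝ) (k : ℕ) (x : Pt n) : ℝ :=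
  (Real.cosh (xiC n α x) - cosT n α x) ^ ((n : ℝ) / 2) *
    (Real.exp (((k : ℝ) + (n : ℝ) / 2) * (2 * ξ₁ - xiC n α x))
      - Real.exp (((k : ℝ) + (n : ℝ) / 2) * xiC n α x)) *
    gegen n k (cosT n α x)

/-- Boundary mode `g̃_k` on `Γ_S`. -/
def gtilde (n : ℕ) (ξ₂ α : ℝ) (k : ℕ) (x : Pt n) : ℝ :=
  (Real.cosh ξ₂ - cosT n α x) ^ ((n : ℝ) / 2) * gegen n k (cosT n α x)

/-- Outward unit normal of `B₂` at `x ∈ Γ_S`. -/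
def nuS (n : ℕ) (ξ₂ α : ℝ) (x : Pt n) : Pt n := (rad α ξ₂)⁻¹ • (x - ctr n α ξ₂)

/-- Normal derivative `∂v/∂n(x)` on `Γ_S`. -/
def normalDeriv (n : ℕ) (ξ₂ α : ℝ) (v : Pt n → ℝ) (x : Pt n) : ℝ :=
  fderiv ℝ v x (nuS n ξ₂ α x)

/-- `E_k = e^{(k+n/2)(2ξ₁−ξ₂)} − e^{(k+n/2)ξ₂}`. -/
def modeCoeff (n : ℕ) (ξ₁ ξ₂ : ℝ) (k : ℕ) : ℝ :=
  Real.exp (((k : ℝ) + (n : ℝ) / 2) * (2 * ξ₁ - ξ₂))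
    - Real.exp (((k : ℝ) + (n : ℝ) / 2) * ξ₂)

/-- The truncated eigenfunction `u_{1,m}` built from the coefficients `C̃`. -/
def trunc (n : ℕ) (ξ₁ ξ₂ α : ℝ) (m : ℕ) (C : Fin m → ℝ) (x : Pt n) : ℝ :=
  ∑ k : Fin m, C k * (modeCoeff n ξ₁ ξ₂ (k : ℕ))⁻¹ * uBase n ξ₁ α (k : ℕ) x

/-- `C̃` is an eigenvector of `L_m` for the smallest eigenvalue `σ_{1,m}`. -/
def IsFirstEigvec (n : ℕ) (ξ₁ ξ₂ α : ℝ) (m : ℕ) (C : Fin m → ℝ) : Prop :=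
  C ≠ 0 ∧ (secMat n ξ₁ ξ₂ α m).mulVec C = sigma1 n ξ₁ ξ₂ α m • C

/-- Steklov defect `f_m = ∂u_{1,m}/∂n − σ_{1,m}·u_{1,m}` on `Γ_S`. -/
def defect (n : ℕ) (ξ₁ ξ₂ α : ℝ) (m : ℕ) (C : Fin m → ℝ) (x : Pt n) : ℝ :=
  normalDeriv n ξ₂ α (trunc n ξ₁ ξ₂ α m C) x - sigma1 n ξ₁ ξ₂ α m * trunc n ξ₁ ξ₂ α m C x

/-- Pointwise Laplacian `Δf(x) = Σ_i ∂²f/∂x_i²`. -/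
def lap (n : ℕ) (f : Pt n → ℝ) (x : Pt n) : ℝ :=
  ∑ i : Fin (n + 2),
    fderiv ℝ (fun y => fderiv ℝ f y (EuclideanSpace.single i 1)) x (EuclideanSpace.single i 1)

end SD

/-!
`L_N` is the symmetric tridiagonal matrix with diagonal `d_k / (2α)` and off-diagonal
`b_k = -w_{k+1} c_k c_{k+1} / (2α) < 0`. For `x_k = e^{-kξ₂} √(binom (k+n-1) k) / c_k` every row
of `L_N x` is at least `n sinh ξ₂ (c_k² - 1) x_k / (2α) > 0`, and a matrix with nonpositive
off-diagonal entries that maps some positive vector to a positive vector has only positive real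
eigenvalues (compare `|v_k| / x_k` at its maximum). For the strict decrease, an eigenvector `v` of
`L_N` for `σ_{1,N}` has `v_{N-1} ≠ 0` since no `b_k` vanishes; appending a small coordinate of the
right sign to `v` gives a vector whose Rayleigh quotient for `L_{N+1}` lies below `σ_{1,N}`.
-/

theorem Real.tanh_pos {x : ℝ} (hx : 0 < x) : 0 < tanh x := by
  rw [tanh_eq_sinh_div_cosh]
  exact div_pos (sinh_pos_iff.2 hx) (cosh_pos x)

theorem exists_two_mul_mul_add_sq_mul_neg {q : ℝ} (hq : q ≠ 0) (D : ℝ) :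
    ∃ t : ℝ, 2 * t * q + t ^ 2 * D < 0 := by
  refine ⟨-q / (|D| + 1), ?_⟩
  have hs : 0 < |D| + 1 := by positivity
  have hq2 : 0 < q ^ 2 := by positivity
  field_simp
  nlinarith [le_abs_self D, abs_nonneg D]

namespace Matrix

variable {ι : Type*} [Fintype ι]

def eigenvalueSet (A : Matrix ι ι ℝ) : Set ℝ := {σ | ∃ v, v ≠ 0 ∧ A *ᵥ v = σ • v}

theorem eigenvalueSet_finite [DecidableEq ι] (A : Matrix ι ι ℝ) : A.eigenvalueSet.Finite :=
  (Module.End.finite_hasEigenvalue (toLin' A)).subset fun _ ⟨v, hv, hAv⟩ ↦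
    Module.End.hasEigenvalue_of_hasEigenvector
      ⟨Module.End.mem_eigenspace_iff.2 (by simpa using hAv), hv⟩

variable {A : Matrix ι ι ℝ}

theorem IsHermitian.eigenvalues_mem_eigenvalueSet [DecidableEq ι] (hA : A.IsHermitian) (i : ι) :
    hA.eigenvalues i ∈ A.eigenvalueSet :=
  ⟨⇑(hA.eigenvectorBasis i), fun h ↦ hA.eigenvectorBasis.orthonormal.ne_zero i
    (by simpa using congrArg (WithLp.toLp 2) h), hA.mulVec_eigenvectorBasis i⟩

theorem IsHermitian.sInf_eigenvalueSet_mem [DecidableEq ι] [Nonempty ι] (hA : A.IsHermitian) :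
    sInf A.eigenvalueSet ∈ A.eigenvalueSet :=
  Set.Nonempty.csInf_mem ⟨_, hA.eigenvalues_mem_eigenvalueSet (Classical.arbitrary ι)⟩
    (eigenvalueSet_finite A)

theorem IsHermitian.sInf_eigenvalueSet_mul_le [DecidableEq ι] (hA : A.IsHermitian) (v : ι → ℝ) :
    sInf A.eigenvalueSet * (v ⬝ᵥ v) ≤ v ⬝ᵥ A *ᵥ v := by
  set c := sInf A.eigenvalueSet
  have hB : (A - c • 1).IsHermitian := hA.sub (isHermitian_one.smul (IsSelfAdjoint.all c))
  have hPSD : (A - c • 1).PosSemidef := by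
    refine hB.posSemidef_iff_eigenvalues_nonneg.2 fun i ↦ ?_
    obtain ⟨w, hw, hBw⟩ := hB.eigenvalues_mem_eigenvalueSet i
    have hmem : hB.eigenvalues i + c ∈ A.eigenvalueSet := by
      refine ⟨w, hw, ?_⟩
      rw [sub_mulVec, smul_mulVec, one_mulVec, sub_eq_iff_eq_add] at hBw
      rw [hBw, add_smul]
    have := csInf_le (eigenvalueSet_finite A).bddBelow hmem
    simp only [Pi.zero_apply]
    linarith
  have := hPSD.dotProduct_mulVec_nonneg v
  simp only [star_trivial, sub_mulVec, smul_mulVec, one_mulVec, dotProduct_sub,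
    dotProduct_smul, smul_eq_mul] at this
  linarith

theorem pos_of_mem_eigenvalueSet_of_offDiag_nonpos (hoff : ∀ i j, i ≠ j → A i j ≤ 0) {x : ι → ℝ}
    (hx : ∀ i, 0 < x i) (hAx : ∀ i, 0 < (A *ᵥ x) i) {μ : ℝ} (hμ : μ ∈ A.eigenvalueSet) :
    0 < μ := by
  obtain ⟨v, hv, hAv⟩ := hμ
  obtain ⟨i, hi⟩ := Function.ne_iff.1 hv
  obtain ⟨k, -, hk⟩ := Finset.univ.exists_max_image (fun j ↦ |v j| / x j) ⟨i, Finset.mem_univ i⟩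
  have hvk : 0 < |v k| := (div_pos_iff_of_pos_right (hx k)).1 <|
    (div_pos (abs_pos.2 hi) (hx i)).trans_le (hk i (Finset.mem_univ i))
  have hterm : ∀ j, A k j * x j * v k ^ 2 ≤ A k j * v j * (v k * x k) := by
    intro j
    rcases eq_or_ne j k with rfl | hjk
    · exact le_of_eq (by ring)
    · have h := (div_le_div_iff₀ (hx j) (hx k)).1 (hk j (Finset.mem_univ j))
      have : v j * v k * x k ≤ x j * v k ^ 2 := calc
        v j * v k * x k ≤ |v j * v k| * x k := mul_le_mul_of_nonneg_right (le_abs_self _) (hx k).le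
        _ = |v j| * x k * |v k| := by rw [abs_mul]; ring
        _ ≤ |v k| * x j * |v k| := mul_le_mul_of_nonneg_right h hvk.le
        _ = x j * v k ^ 2 := by rw [← sq_abs (v k)]; ring
      nlinarith [hoff k j hjk.symm]
  have hrow : (A *ᵥ x) k * v k ^ 2 ≤ μ * (v k ^ 2 * x k) := by
    have hμk : (A *ᵥ v) k = μ * v k := by rw [hAv, Pi.smul_apply, smul_eq_mul]
    calc (A *ᵥ x) k * v k ^ 2 = ∑ j, A k j * x j * v k ^ 2 := by
          rw [mulVec, dotProduct, Finset.sum_mul]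
      _ ≤ ∑ j, A k j * v j * (v k * x k) := Finset.sum_le_sum fun j _ ↦ hterm j
      _ = μ * (v k ^ 2 * x k) := by
          rw [← Finset.sum_mul, ← dotProduct, ← mulVec, hμk]; ring
  have hvk2 : 0 < v k ^ 2 := by rw [← sq_abs]; positivity
  exact pos_of_mul_pos_left ((mul_pos (hAx k) hvk2).trans_le hrow) (mul_pos hvk2 (hx k)).le

section Tridiagonal

open Finset

variable {R : Type*} [CommRing R]

def tridiag (a b : ℕ → R) (N : ℕ) : Matrix (Fin N) (Fin N) R :=
  of fun i j ↦ (if (j : ℕ) = i then a i else 0) + (if (j : ℕ) = i + 1 then b i else 0) +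
    (if (i : ℕ) = j + 1 then b j else 0)

theorem tridiag_transpose (a b : ℕ → R) (N : ℕ) : (tridiag a b N)ᵀ = tridiag a b N := by
  ext i j
  simp only [tridiag, transpose_apply, of_apply]
  split_ifs <;> first | omega | simp_all

theorem isHermitian_tridiag (a b : ℕ → ℝ) (N : ℕ) : (tridiag a b N).IsHermitian := by
  rw [IsHermitian, conjTranspose_eq_transpose_of_trivial, tridiag_transpose]

theorem tridiag_apply_nonpos_of_ne {a b : ℕ → ℝ} (hb : ∀ k, b k ≤ 0) {N : ℕ} {i j : Fin N}
    (hij : i ≠ j) : tridiag a b N i j ≤ 0 := by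
  have : (j : ℕ) ≠ i := fun h ↦ hij (Fin.ext h.symm)
  simp only [tridiag, of_apply, if_neg this, zero_add]
  split_ifs <;> linarith [hb i, hb j]

theorem tridiag_mulVec_apply (a b u : ℕ → R) {N : ℕ} (i : Fin N) :
    (tridiag a b N *ᵥ (u ∘ Fin.val)) i = a i * u i +
      (if (i : ℕ) + 1 < N then b i * u (i + 1) else 0) +
      (if 0 < (i : ℕ) then b (i - 1) * u (i - 1) else 0) := by
  simp only [mulVec, dotProduct, tridiag, of_apply, Function.comp_apply, add_mul, ite_mul,
    zero_mul, sum_add_distrib]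
  rw [Fin.sum_univ_eq_sum_range (fun j ↦ if j = i then a i * u j else 0),
    Fin.sum_univ_eq_sum_range (fun j ↦ if j = i + 1 then b i * u j else 0),
    Fin.sum_univ_eq_sum_range (fun j ↦ if (i : ℕ) = j + 1 then b j * u j else 0),
    sum_ite_eq', sum_ite_eq', if_pos (mem_range.2 i.2)]
  congr 1
  · simp only [mem_range]
  · have := i.2
    cases h : (i : ℕ) with
    | zero => simp
    | succ m => simp [sum_ite_eq, show m < N by omega]

theorem tridiag_dotProduct_mulVec (a b u : ℕ → R) (N : ℕ) :
    (u ∘ Fin.val) ⬝ᵥ (tridiag a b (N + 1) *ᵥ (u ∘ Fin.val)) =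
      ∑ i ∈ range (N + 1), a i * u i ^ 2 + 2 * ∑ i ∈ range N, b i * u i * u (i + 1) := by
  set f : ℕ → R := fun i ↦ u i * (a i * u i + (if i + 1 < N + 1 then b i * u (i + 1) else 0) +
    (if 0 < i then b (i - 1) * u (i - 1) else 0))
  calc (u ∘ Fin.val) ⬝ᵥ (tridiag a b (N + 1) *ᵥ (u ∘ Fin.val))
      = ∑ i : Fin (N + 1), f i := sum_congr rfl fun i _ ↦ by rw [tridiag_mulVec_apply]; rfl
    _ = ∑ i ∈ range (N + 1), f i := Fin.sum_univ_eq_sum_range f _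
    _ = _ := by
      simp only [f, mul_add, sum_add_distrib]
      rw [sum_range_succ (fun i ↦ u i * ite _ _ _) N, sum_range_succ' (fun i ↦ u i * ite _ _ _) N]
      simp only [lt_irrefl, if_false, Nat.add_lt_add_iff_right, add_tsub_cancel_right, mul_zero,
        add_zero, Nat.zero_lt_succ, if_true]
      have hdiag : ∑ i ∈ range (N + 1), u i * (a i * u i) = ∑ i ∈ range (N + 1), a i * u i ^ 2 :=
        sum_congr rfl fun _ _ ↦ by ring
      have hsuper : ∑ i ∈ range N, u i * (if i < N then b i * u (i + 1) else 0) =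
          ∑ i ∈ range N, b i * u i * u (i + 1) :=
        sum_congr rfl fun i hi ↦ by rw [if_pos (mem_range.1 hi)]; ring
      have hsub : ∑ i ∈ range N, u (i + 1) * (b i * u i) = ∑ i ∈ range N, b i * u i * u (i + 1) :=
        sum_congr rfl fun _ _ ↦ by ring
      rw [hdiag, hsuper, hsub]
      ring

theorem tridiag_eigenvector_last_ne_zero [NoZeroDivisors R] {a b : ℕ → R} (hb : ∀ k, b k ≠ 0)
    {N : ℕ} {u : ℕ → R} {μ : R} (hu : u ∘ Fin.val ≠ (0 : Fin (N + 1) → R))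
    (hμ : tridiag a b (N + 1) *ᵥ (u ∘ Fin.val) = μ • (u ∘ Fin.val)) : u N ≠ 0 := by
  classical
  intro huN
  obtain ⟨i, hi⟩ := Function.ne_iff.1 hu
  set s := (range (N + 1)).filter (u · ≠ 0)
  have hs : s.Nonempty := ⟨i, mem_filter.2 ⟨mem_range.2 i.2, hi⟩⟩
  set k := s.max' hs
  obtain ⟨hk_mem, huk⟩ := mem_filter.1 (s.max'_mem hs)
  have hkN : k < N := lt_of_le_of_ne (Nat.lt_succ_iff.1 (mem_range.1 hk_mem)) (by grind)
  have hzero : ∀ j, k < j → j ≤ N → u j = 0 := fun j hkj hjN ↦ by_contra fun h ↦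
    not_lt.2 (s.le_max' j (mem_filter.2 ⟨mem_range.2 (Nat.lt_succ_of_le hjN), h⟩)) hkj
  have hrow := congrFun hμ ⟨k + 1, by omega⟩
  rw [tridiag_mulVec_apply] at hrow
  -- row `k + 1` of the eigenvalue equation reduces to `b k * u k = 0`
  simp only [Function.comp_apply, Pi.smul_apply, smul_eq_mul, hzero (k + 1) (by omega) hkN,
    mul_zero, zero_add, Nat.zero_lt_succ, if_true, add_tsub_cancel_right] at hrow
  split_ifs at hrow with h
  · rw [hzero (k + 1 + 1) (by omega) (by omega), mul_zero, zero_add] at hrow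
    exact mul_ne_zero (hb k) huk hrow
  · exact mul_ne_zero (hb k) huk (by simpa using hrow)

theorem dotProduct_comp_val (u w : ℕ → R) (N : ℕ) :
    (u ∘ Fin.val : Fin N → R) ⬝ᵥ (w ∘ Fin.val) = ∑ i ∈ range N, u i * w i :=
  Fin.sum_univ_eq_sum_range (fun i ↦ u i * w i) N

theorem tridiag_dotProduct_mulVec_update (a b u : ℕ → R) (N : ℕ) (t : R) :
    (Function.update u (N + 1) t ∘ Fin.val) ⬝ᵥ
        (tridiag a b (N + 2) *ᵥ (Function.update u (N + 1) t ∘ Fin.val)) =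
      (u ∘ Fin.val) ⬝ᵥ (tridiag a b (N + 1) *ᵥ (u ∘ Fin.val)) + 2 * t * (b N * u N) +
        t ^ 2 * a (N + 1) := by
  set u' := Function.update u (N + 1) t
  have hu : ∀ i < N + 1, u' i = u i := fun i hi ↦ Function.update_of_ne hi.ne _ _
  have ht : u' (N + 1) = t := Function.update_self _ _ _
  have hdiag : ∑ i ∈ range (N + 1), a i * u' i ^ 2 = ∑ i ∈ range (N + 1), a i * u i ^ 2 :=
    sum_congr rfl fun i hi ↦ by rw [hu i (mem_range.1 hi)]
  have hoff : ∑ i ∈ range N, b i * u' i * u' (i + 1) = ∑ i ∈ range N, b i * u i * u (i + 1) :=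
    sum_congr rfl fun i hi ↦ by
      rw [hu i (by grind), hu (i + 1) (by grind)]
  rw [tridiag_dotProduct_mulVec, tridiag_dotProduct_mulVec,
    sum_range_succ (fun i ↦ a i * u' i ^ 2), sum_range_succ (fun i ↦ b i * u' i * u' (i + 1)),
    hdiag, hoff, hu N N.lt_succ_self, ht]
  ring

theorem dotProduct_update_self (u : ℕ → R) (N : ℕ) (t : R) :
    (Function.update u (N + 1) t ∘ Fin.val : Fin (N + 2) → R) ⬝ᵥ
        (Function.update u (N + 1) t ∘ Fin.val) =
      (u ∘ Fin.val : Fin (N + 1) → R) ⬝ᵥ (u ∘ Fin.val) + t ^ 2 := by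
  rw [dotProduct_comp_val, dotProduct_comp_val, sum_range_succ, Function.update_self, sq,
    sum_congr rfl fun i hi ↦ by rw [Function.update_of_ne (mem_range.1 hi).ne]]

end Tridiagonal

theorem sInf_eigenvalueSet_tridiag_succ_lt {a b : ℕ → ℝ} (hb : ∀ k, b k ≠ 0) (N : ℕ) :
    sInf (tridiag a b (N + 2)).eigenvalueSet < sInf (tridiag a b (N + 1)).eigenvalueSet := by
  set μ := sInf (tridiag a b (N + 1)).eigenvalueSet
  obtain ⟨v, hv, hAv⟩ := (isHermitian_tridiag a b (N + 1)).sInf_eigenvalueSet_mem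
  obtain ⟨u, rfl⟩ : ∃ u : ℕ → ℝ, u ∘ Fin.val = v :=
    ⟨Function.extend Fin.val v 0, funext (Fin.val_injective.extend_apply v 0)⟩
  obtain ⟨t, ht⟩ := exists_two_mul_mul_add_sq_mul_neg
    (mul_ne_zero (hb N) (tridiag_eigenvector_last_ne_zero hb hv hAv)) (a (N + 1) - μ)
  have hQ := tridiag_dotProduct_mulVec_update a b u N t
  rw [hAv, dotProduct_smul, smul_eq_mul] at hQ
  have hnorm := dotProduct_update_self u N t
  have hle := (isHermitian_tridiag a b (N + 2)).sInf_eigenvalueSet_mul_le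
    (Function.update u (N + 1) t ∘ Fin.val)
  have hvv : 0 < (u ∘ Fin.val : Fin (N + 1) → ℝ) ⬝ᵥ (u ∘ Fin.val) := by
    simpa using dotProduct_self_star_pos_iff.2 hv
  have hpos : 0 < (u ∘ Fin.val : Fin (N + 1) → ℝ) ⬝ᵥ (u ∘ Fin.val) + t ^ 2 := by positivity
  rw [hQ, hnorm] at hle
  refine lt_of_mul_lt_mul_right (hle.trans_lt ?_) hpos.le
  linear_combination ht

end Matrix

namespace SD

open Matrix

section

variable (n : ℕ) (ξ₁ ξ₂ α : ℝ)

def secDiag (k : ℕ) : ℝ := dseq n ξ₁ ξ₂ k / (2 * α)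

def secOffDiag (k : ℕ) : ℝ :=
  -(wseq n (k + 1) * cseq n ξ₁ ξ₂ k * cseq n ξ₁ ξ₂ (k + 1)) / (2 * α)

theorem secMat_eq_tridiag (N : ℕ) :
    secMat n ξ₁ ξ₂ α N = tridiag (secDiag n ξ₁ ξ₂ α) (secOffDiag n ξ₁ ξ₂ α) N := by
  ext i j
  simp only [secMat, tridiag, of_apply, secDiag, secOffDiag]
  split_ifs <;> first | omega | simp_all

theorem sigma1_eq (N : ℕ) :
    sigma1 n ξ₁ ξ₂ α N =
      sInf (tridiag (secDiag n ξ₁ ξ₂ α) (secOffDiag n ξ₁ ξ₂ α) N).eigenvalueSet := by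
  rw [sigma1, secMat_eq_tridiag]
  rfl

def testSeq (ξ : ℝ) : ℕ → ℝ
  | 0 => 1
  | k + 1 => (k + n) * exp (-ξ) * testSeq ξ k / wseq n (k + 1)

def testVec (k : ℕ) : ℝ := testSeq n ξ₂ k / cseq n ξ₁ ξ₂ k

variable {n ξ₁ ξ₂ α}

theorem tanh_cseq_pos (hn : 0 < n) (hξ : ξ₂ < ξ₁) (m : ℕ) :
    0 < tanh ((m + n / 2 : ℝ) * (ξ₁ - ξ₂)) := by
  have : (0 : ℝ) < n := Nat.cast_pos.2 hn
  exact Real.tanh_pos (by nlinarith)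

theorem cseq_sq (hn : 0 < n) (hξ : ξ₂ < ξ₁) (m : ℕ) :
    cseq n ξ₁ ξ₂ m ^ 2 = (tanh ((m + n / 2 : ℝ) * (ξ₁ - ξ₂)))⁻¹ := by
  rw [cseq, ← rpow_natCast, ← rpow_mul (tanh_cseq_pos hn hξ m).le]
  norm_num [rpow_neg_one]

theorem cseq_pos (hn : 0 < n) (hξ : ξ₂ < ξ₁) (m : ℕ) : 0 < cseq n ξ₁ ξ₂ m :=
  rpow_pos_of_pos (tanh_cseq_pos hn hξ m) _

theorem one_lt_cseq_sq (hn : 0 < n) (hξ : ξ₂ < ξ₁) (m : ℕ) : 1 < cseq n ξ₁ ξ₂ m ^ 2 := by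
  rw [cseq_sq hn hξ]
  exact one_lt_inv_iff₀.2 ⟨tanh_cseq_pos hn hξ m, tanh_lt_one _⟩

theorem wseq_zero : wseq n 0 = 0 := by simp [wseq]

theorem wseq_succ_sq (k : ℕ) : wseq n (k + 1) ^ 2 = (k + n) * (k + 1) := by
  rw [wseq, Nat.cast_succ, show (k + 1 + n - 1 : ℝ) = k + n by ring, sq_sqrt (by positivity)]

theorem wseq_succ_pos (hn : 0 < n) (k : ℕ) : 0 < wseq n (k + 1) := by
  have : (0 : ℝ) < n := Nat.cast_pos.2 hn
  rw [wseq, Nat.cast_succ, show (k + 1 + n - 1 : ℝ) = k + n by ring]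
  positivity

theorem secOffDiag_neg (hn : 0 < n) (hξ : ξ₂ < ξ₁) (hα : 0 < α) (k : ℕ) :
    secOffDiag n ξ₁ ξ₂ α k < 0 := by
  have := wseq_succ_pos hn k
  have := cseq_pos hn hξ k
  have := cseq_pos hn hξ (k + 1)
  rw [secOffDiag, neg_div]
  exact neg_neg_of_pos (by positivity)

theorem testSeq_pos (hn : 0 < n) (ξ : ℝ) (k : ℕ) : 0 < testSeq n ξ k := by
  induction k with
  | zero => exact one_pos
  | succ k ih =>
    have := wseq_succ_pos hn k
    rw [testSeq]
    positivity

theorem testVec_pos (hn : 0 < n) (hξ : ξ₂ < ξ₁) (k : ℕ) : 0 < testVec n ξ₁ ξ₂ k :=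
  div_pos (testSeq_pos hn ξ₂ k) (cseq_pos hn hξ k)

theorem wseq_mul_testSeq_succ (hn : 0 < n) (ξ : ℝ) (k : ℕ) :
    wseq n (k + 1) * testSeq n ξ (k + 1) = (k + n) * exp (-ξ) * testSeq n ξ k := by
  rw [testSeq, mul_div_cancel₀ _ (wseq_succ_pos hn k).ne']

theorem wseq_mul_testSeq_pred (hn : 0 < n) (ξ : ℝ) (k : ℕ) :
    wseq n k * testSeq n ξ (k - 1) = k * exp ξ * testSeq n ξ k := by
  cases k with
  | zero => simp [wseq_zero]
  | succ k =>
    have hw := wseq_succ_pos hn k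
    rw [add_tsub_cancel_right, testSeq]
    field_simp
    rw [wseq_succ_sq, exp_neg]
    field_simp
    push_cast
    ring

theorem secRow_testVec (hn : 0 < n) (hξ : ξ₂ < ξ₁) (hα : 0 < α) (i : ℕ) :
    secDiag n ξ₁ ξ₂ α i * testVec n ξ₁ ξ₂ i + secOffDiag n ξ₁ ξ₂ α i * testVec n ξ₁ ξ₂ (i + 1) +
        (if 0 < i then secOffDiag n ξ₁ ξ₂ α (i - 1) * testVec n ξ₁ ξ₂ (i - 1) else 0) =
      n * sinh ξ₂ * (cseq n ξ₁ ξ₂ i ^ 2 - 1) * testVec n ξ₁ ξ₂ i / (2 * α) := by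
  have hc : ∀ k, cseq n ξ₁ ξ₂ k ≠ 0 := fun k ↦ (cseq_pos hn hξ k).ne'
  have hlow : (if 0 < i then secOffDiag n ξ₁ ξ₂ α (i - 1) * testVec n ξ₁ ξ₂ (i - 1) else 0) =
      -(cseq n ξ₁ ξ₂ i * (wseq n i * testSeq n ξ₂ (i - 1))) / (2 * α) := by
    cases i with
    | zero => simp [wseq_zero]
    | succ i =>
      simp only [Nat.zero_lt_succ, if_true, add_tsub_cancel_right, secOffDiag, testVec]
      field_simp [hc i]
  have hsup := wseq_mul_testSeq_succ hn ξ₂ i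
  have hsub := wseq_mul_testSeq_pred hn ξ₂ i
  rw [← cosh_sub_sinh] at hsup
  rw [← cosh_add_sinh] at hsub
  rw [hlow]
  simp only [secDiag, secOffDiag, dseq, testVec]
  linear_combination (norm := skip) (-cseq n ξ₁ ξ₂ i / (2 * α)) * (hsup + hsub)
  field_simp [hc i, hc (i + 1)]
  ring

theorem tridiag_mulVec_testVec_pos (hn : 0 < n) (hξ : ξ₂ < ξ₁) (hξ₂ : 0 < ξ₂) (hα : 0 < α)
    {N : ℕ} (i : Fin N) :
    0 < (tridiag (secDiag n ξ₁ ξ₂ α) (secOffDiag n ξ₁ ξ₂ α) N *ᵥ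
      (testVec n ξ₁ ξ₂ ∘ Fin.val)) i := by
  have hrow := secRow_testVec hn hξ hα i
  have hsup : secOffDiag n ξ₁ ξ₂ α i * testVec n ξ₁ ξ₂ (i + 1) < 0 :=
    mul_neg_of_neg_of_pos (secOffDiag_neg hn hξ hα i) (testVec_pos hn hξ _)
  have hpos : 0 < n * sinh ξ₂ * (cseq n ξ₁ ξ₂ i ^ 2 - 1) * testVec n ξ₁ ξ₂ i / (2 * α) := by
    have := sub_pos.2 (one_lt_cseq_sq hn hξ i)
    have := testVec_pos hn hξ i
    have := sinh_pos_iff.2 hξ₂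
    have : (0 : ℝ) < n := Nat.cast_pos.2 hn
    positivity
  rw [tridiag_mulVec_apply]
  split_ifs at hrow ⊢ <;> linarith

theorem sigma1_pos (hn : 0 < n) (hξ : ξ₂ < ξ₁) (hξ₂ : 0 < ξ₂) (hα : 0 < α) (N : ℕ) :
    0 < sigma1 n ξ₁ ξ₂ α (N + 1) := by
  rw [sigma1_eq]
  exact pos_of_mem_eigenvalueSet_of_offDiag_nonpos
    (fun _ _ hij ↦ tridiag_apply_nonpos_of_ne (fun k ↦ (secOffDiag_neg hn hξ hα k).le) hij)
    (fun k ↦ testVec_pos hn hξ k) (tridiag_mulVec_testVec_pos hn hξ hξ₂ hα)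
    (isHermitian_tridiag _ _ _).sInf_eigenvalueSet_mem

end

end SD

open SD in
/-- Lemma 3.3: the smallest eigenvalues of the finite sections form a strictly decreasing
sequence of positive numbers. -/
theorem sigma1_pos_strict_anti
    (n : ℕ) (hn : 1 ≤ n) (ξ₁ ξ₂ α : ℝ) (hξ : ξ₂ < ξ₁) (hξ₂ : 0 < ξ₂) (hα : 0 < α) :
    ∀ N : ℕ, 1 ≤ N →
      0 < sigma1 n ξ₁ ξ₂ α (N + 1) ∧ sigma1 n ξ₁ ξ₂ α (N + 1) < sigma1 n ξ₁ ξ₂ α N := by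
  intro N hN
  obtain ⟨M, rfl⟩ := Nat.exists_eq_add_of_le' hN
  refine ⟨sigma1_pos hn hξ hξ₂ hα (M + 1), ?_⟩
  rw [sigma1_eq, sigma1_eq]
  exact Matrix.sInf_eigenvalueSet_tridiag_succ_lt (fun k ↦ (secOffDiag_neg hn hξ hα k).ne) M
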